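/- arXiv:1410.2061 — 5 statements merged into one kernel-verified Lean document; each statement's English description precedes it below -/
import Mathlib

section
/- If λ is a simultaneous (t, t+1, …, t+p)-core partition, then no nonnegative integer linear combination Σ_{i=0}^{p} c_i(t+i) (with c_i ≥ 0 integers) belongs to the β-set of λ. -/
open Finset

/-- A partition: a weakly decreasing finite list of positive integers. -/
structure NatPartition where
  parts : List ℕ
  sorted : parts.Pairwise (· ≥ ·)
  pos : ∀ x ∈ parts, 0 < x

namespace NatPartition

/-- The size of a partition: the sum of its parts. -/
def size (l : NatPartition) : ℕ := l.parts.sum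

/-- The hook length of the box in row `i`, column `j` (both 0-indexed):
arm + leg + 1, computed as `λ_i - j + #{k : λ_k > j} - i - 1`. -/
def hook (l : NatPartition) (i j : ℕ) : ℕ :=
  l.parts.getD i 0 - j + l.parts.countP (fun a => decide (j < a)) - i - 1

/-- The box `(i, j)` (0-indexed) belongs to the Young diagram of `l`. -/
def InDiagram (l : NatPartition) (i j : ℕ) : Prop :=
  i < l.parts.length ∧ j < l.parts.getD i 0

/-- A partition is a `t`-core if no hook length is divisible by `t`. -/
def IsCore (l : NatPartition) (t : ℕ) : Prop :=
  ∀ i j, l.InDiagram i j → ¬ t ∣ l.hook i j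

/-- The β-set of a partition: the set of first-column hook lengths. -/
def betaSet (l : NatPartition) : Finset ℕ :=
  (Finset.range l.parts.length).image (fun i => l.hook i 0)

end NatPartition

namespace NatPartition

variable (l : NatPartition)

lemma lam_pos {i : ℕ} (hi : i < l.parts.length) : 0 < l.parts.getD i 0 := by
  rw [List.getD_eq_getElem _ _ hi]
  exact l.pos _ (List.getElem_mem hi)

lemma lam_anti {i k : ℕ} (hik : i ≤ k) (hk : k < l.parts.length) :
    l.parts.getD k 0 ≤ l.parts.getD i 0 := by
  have hi : i < l.parts.length := lt_of_le_of_lt hik hk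
  rw [List.getD_eq_getElem _ _ hi, List.getD_eq_getElem _ _ hk]
  exact l.sorted.rel_get_of_le (a := ⟨i, hi⟩) (b := ⟨k, hk⟩) hik

lemma countP_pos_eq : l.parts.countP (fun a => decide (0 < a)) = l.parts.length := by
  rw [List.countP_eq_length]
  intro a ha
  simpa using l.pos a ha

lemma hook_zero {i : ℕ} (hi : i < l.parts.length) :
    l.hook i 0 = l.parts.getD i 0 + (l.parts.length - 1 - i) := by
  have h1 := l.lam_pos hi
  rw [hook, countP_pos_eq]
  omega

lemma mem_betaSet {x : ℕ} :
    x ∈ l.betaSet ↔ ∃ i < l.parts.length, l.hook i 0 = x := by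
  simp [betaSet]

/-- Counting lemma: if the predicate holds exactly on the first `r` indices,
the count is `r`. -/
lemma countP_eq_of_prefix (parts : List ℕ) (q : ℕ → Bool) (r : ℕ) (hr : r ≤ parts.length)
    (h : ∀ k (hk : k < parts.length), q (parts.get ⟨k, hk⟩) = true ↔ k < r) :
    parts.countP q = r := by
  rw [← List.take_append_drop r parts, List.countP_append]
  have h1 : (parts.take r).countP q = r := by
    rw [List.countP_eq_length.2, List.length_take]
    · omega
    · intro a ha
      obtain ⟨⟨k, hk⟩, rfl⟩ := List.mem_iff_get.1 ha
      have hk' : k < r := by simpa [hr] using hk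
      have hkl : k < parts.length := lt_of_lt_of_le hk' hr
      simp only [List.get_eq_getElem, List.getElem_take]
      exact (h k hkl).2 hk'
  have h2 : (parts.drop r).countP q = 0 := by
    rw [List.countP_eq_zero]
    intro a ha
    obtain ⟨⟨k, hk⟩, rfl⟩ := List.mem_iff_get.1 ha
    have hkl : r + k < parts.length := by
      have := (List.length_drop : (parts.drop r).length = _) ▸ hk
      omega
    simp only [List.get_eq_getElem, List.getElem_drop]
    intro hq
    have := (h _ hkl).1 hq
    omega
  omega

/-- Main combinatorial lemma: a "gap" below a first-column hook length gives
rise to a hook in that row. -/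
lemma exists_hook_of_gap {i c : ℕ} (hi : i < l.parts.length)
    (hc : c < l.hook i 0) (hcb : c ∉ l.betaSet) :
    ∃ j < l.parts.getD i 0, l.hook i j = l.hook i 0 - c := by
  classical
  set m := l.parts.length with hm
  -- define r
  by_cases hex : ∃ k, k < m ∧ l.hook k 0 ≤ c
  · set r := Nat.find hex with hrdef
    have hrspec : r < m ∧ l.hook r 0 ≤ c := Nat.find_spec hex
    have hiff : ∀ k, k < m → (c < l.hook k 0 ↔ k < r) := by
      intro k hk
      constructor
      · intro hck
        by_contra hkr
        push_neg at hkr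
        have h1 := l.lam_anti hkr hk
        have h2 := hrspec.2
        rw [l.hook_zero hk] at hck
        rw [l.hook_zero hrspec.1] at h2
        omega
      · intro hkr
        have := Nat.find_min hex hkr
        push_neg at this
        omega
    have hir : i < r := (hiff i hi).1 hc
    have hrm : r ≤ m := le_of_lt hrspec.1
    -- hook r 0 ≠ c since c ∉ betaSet
    have hne : l.hook r 0 ≠ c := by
      intro h
      exact hcb (l.mem_betaSet.2 ⟨r, hrspec.1, h⟩)
    have hrc : l.hook r 0 < c := lt_of_le_of_ne hrspec.2 hne
    have hlr := l.hook_zero hrspec.1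
    have hlrpos := l.lam_pos hrspec.1
    -- m ≤ c + r
    have hmcr : m ≤ c + r := by omega
    set j := c + r - m with hjdef
    -- Claim A
    have hA : ∀ k (hk : k < m), (decide (j < l.parts.getD k 0) = true) ↔ k < r := by
      intro k hk
      simp only [decide_eq_true_eq]
      constructor
      · intro hjk
        by_contra hkr
        push_neg at hkr
        have := l.lam_anti hkr hk
        omega
      · intro hkr
        have hr1 : r - 1 < m := by omega
        have h1 : c < l.hook (r-1) 0 := (hiff (r-1) hr1).2 (by omega)
        rw [l.hook_zero hr1] at h1
        have := l.lam_anti (show k ≤ r - 1 by omega) hr1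
        omega
    have hcount : l.parts.countP (fun a => decide (j < a)) = r := by
      apply countP_eq_of_prefix l.parts _ r hrm
      intro k hk
      have := hA k hk
      rw [List.getD_eq_getElem _ _ hk] at this
      simpa using this
    have hji : j < l.parts.getD i 0 := by
      have := (hA i hi).2 hir
      simpa using this
    refine ⟨j, hji, ?_⟩
    rw [hook, hcount, l.hook_zero hi]
    omega
  · -- r = m : all hooks > c
    push_neg at hex
    have hmcr : m ≤ c + m := by omega
    set j := c with hjdef
    have hA : ∀ k (hk : k < m), (decide (j < l.parts.getD k 0) = true) ↔ k < m := by
      intro k hk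
      simp only [decide_eq_true_eq, hk, iff_true]
      have hm1 : m - 1 < m := by omega
      have h1 := hex (m - 1) hm1
      rw [l.hook_zero hm1] at h1
      have h2 := l.lam_anti (show k ≤ m - 1 by omega) hm1
      omega
    have hcount : l.parts.countP (fun a => decide (j < a)) = m := by
      apply countP_eq_of_prefix l.parts _ m le_rfl
      intro k hk
      have := hA k hk
      rw [List.getD_eq_getElem _ _ hk] at this
      simpa using this
    have hji : j < l.parts.getD i 0 := by
      have := (hA i hi).2 hi
      simpa using this
    refine ⟨j, hji, ?_⟩
    rw [hook, hcount, l.hook_zero hi]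
    omega

/-- If `l` is an `s`-core and `x ∈ β(l)` with `s ≤ x`, then `x - s ∈ β(l)`. -/
lemma core_closed {s x : ℕ} (hs : 0 < s) (hcore : l.IsCore s)
    (hx : x ∈ l.betaSet) (hsx : s ≤ x) : x - s ∈ l.betaSet := by
  by_contra hne
  obtain ⟨i, hi, hix⟩ := l.mem_betaSet.1 hx
  have hc : x - s < l.hook i 0 := by omega
  obtain ⟨j, hj, hhook⟩ := l.exists_hook_of_gap hi hc hne
  have : l.hook i j = s := by omega
  exact hcore i j ⟨hi, hj⟩ (this ▸ dvd_refl s)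

lemma zero_not_mem_betaSet : 0 ∉ l.betaSet := by
  intro h
  obtain ⟨i, hi, hix⟩ := l.mem_betaSet.1 h
  have := l.lam_pos hi
  rw [l.hook_zero hi] at hix
  omega

end NatPartition

theorem stmt2 (t p : ℕ) (ht : 0 < t) (hp : 0 < p) (l : NatPartition)
    (hcore : ∀ i ≤ p, l.IsCore (t + i)) (c : Fin (p + 1) → ℕ) :
    (∑ i, c i * (t + (i : ℕ))) ∉ l.betaSet := by
  classical
  suffices h : ∀ N (c : Fin (p + 1) → ℕ), (∑ i, c i * (t + (i : ℕ))) ≤ N →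
      (∑ i, c i * (t + (i : ℕ))) ∉ l.betaSet from h _ c le_rfl
  intro N
  induction N with
  | zero =>
      intro c hc
      have : (∑ i, c i * (t + (i : ℕ))) = 0 := by omega
      rw [this]
      exact l.zero_not_mem_betaSet
  | succ N ih =>
      intro c hc hmem
      by_cases hz : ∀ i, c i = 0
      · simp [hz] at hmem
        exact l.zero_not_mem_betaSet hmem
      · push_neg at hz
        obtain ⟨i, hi⟩ := hz
        set S := ∑ j, c j * (t + (j : ℕ)) with hS
        have hsplit : S = c i * (t + (i : ℕ)) + ∑ j ∈ Finset.univ.erase i, c j * (t + (j : ℕ)) :=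
          (Finset.add_sum_erase _ _ (Finset.mem_univ i)).symm
        have hle : t + (i : ℕ) ≤ S := by
          have : 1 * (t + (i : ℕ)) ≤ c i * (t + (i : ℕ)) :=
            Nat.mul_le_mul_right _ (by omega)
          omega
        have hcore' : l.IsCore (t + (i : ℕ)) := hcore i (by omega)
        have hmem' : S - (t + (i : ℕ)) ∈ l.betaSet :=
          l.core_closed (by omega) hcore' hmem hle
        set c' : Fin (p + 1) → ℕ := Function.update c i (c i - 1) with hc'
        have hsum' : (∑ j, c' j * (t + (j : ℕ))) = S - (t + (i : ℕ)) := by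
          have hsplit' : (∑ j, c' j * (t + (j : ℕ)))
              = c' i * (t + (i : ℕ)) + ∑ j ∈ Finset.univ.erase i, c' j * (t + (j : ℕ)) :=
            (Finset.add_sum_erase _ _ (Finset.mem_univ i)).symm
          have heq : ∑ j ∈ Finset.univ.erase i, c' j * (t + (j : ℕ))
              = ∑ j ∈ Finset.univ.erase i, c j * (t + (j : ℕ)) := by
            apply Finset.sum_congr rfl
            intro j hj
            have : j ≠ i := (Finset.mem_erase.1 hj).1
            simp [hc', Function.update_of_ne this]
          rw [hsplit', heq, hc']
          simp only [Function.update_self]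
          have h1 : (c i - 1) * (t + (i : ℕ)) = c i * (t + (i : ℕ)) - (t + (i : ℕ)) := by
            rw [Nat.sub_mul, one_mul]
          have h2 : (t + (i : ℕ)) ≤ c i * (t + (i : ℕ)) :=
            Nat.le_mul_of_pos_left _ (by omega)
          omega
        exact ih c' (by omega) (hsum' ▸ hmem')
end

section
/- The set ⋃_{1 ≤ k ≤ ⌊(t+p−2)/p⌋} S_k, where S_k = {x ∈ ℤ : (k−1)(t+p)+1 ≤ x ≤ kt−1}, is the β-set of some (t, t+1, …, t+p)-core partition. -/
open Finset

/-- Characterization of `countP (j < ·)` for weakly decreasing lists: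
the entries greater than `j` occupy exactly the first `countP` positions. -/
lemma countP_sorted_char : ∀ (l : List ℕ), l.Pairwise (· ≥ ·) → ∀ j k, k < l.length →
    (j < l.getD k 0 ↔ k < l.countP (fun a => decide (j < a))) := by
  intro l
  induction l with
  | nil => intro _ j k hk; simp at hk
  | cons a tl ih =>
    intro hs j k hk
    rw [List.pairwise_cons] at hs
    obtain ⟨ha, hs⟩ := hs
    rw [List.countP_cons]
    by_cases hja : j < a
    · cases k with
      | zero => simp [hja]
      | succ k =>
        have hk' : k < tl.length := by simpa using hk
        have hIH := ih hs j k hk'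
        simpa [List.getD_cons_succ, hja] using hIH
    · have h0 : tl.countP (fun a => decide (j < a)) = 0 := by
        apply List.countP_eq_zero.mpr
        intro x hx
        simp only [decide_eq_true_eq]
        exact fun hjx => hja (lt_of_lt_of_le hjx (ha x hx))
      have hpa : (decide (j < a)) = false := by simpa using hja
      rw [hpa]
      simp only [Bool.false_eq_true, if_false, h0, Nat.add_zero]
      cases k with
      | zero =>
        simp only [List.getD_cons_zero]
        constructor
        · intro hj; exact absurd hj hja
        · intro hj; omega
      | succ k =>
        have hk' : k < tl.length := by simpa using hk
        have hmem : tl.getD k 0 ∈ tl := by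
          rw [List.getD_eq_getElem _ _ hk']; exact List.getElem_mem hk'
        simp only [List.getD_cons_succ]
        constructor
        · intro hj; exact absurd (lt_of_lt_of_le hj (ha _ hmem)) hja
        · intro hj; omega
    
/-- In a strictly decreasing list, entries drop by at least one per step. -/
lemma sorted_gt_gap (l : List ℕ) (hl : l.Pairwise (· > ·)) :
    ∀ d i, i + d < l.length → l.getD (i + d) 0 + d ≤ l.getD i 0 := by
  intro d
  induction d with
  | zero => intro i h; simp
  | succ d ih =>
    intro i h
    have h1 : i + d < l.length := by omega
    have step : l.getD (i + d + 1) 0 < l.getD (i + d) 0 := by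
      rw [List.getD_eq_getElem _ _ h1,
        List.getD_eq_getElem _ _ (show i + d + 1 < l.length by omega)]
      have := List.Pairwise.rel_get_of_lt hl (a := ⟨i + d, h1⟩)
        (b := ⟨i + d + 1, by omega⟩) (Fin.mk_lt_mk.mpr (by omega))
      simpa [List.get_eq_getElem] using this
    have := ih i h1
    show l.getD (i + d + 1) 0 + (d + 1) ≤ l.getD i 0
    omega

/-- If `B` is closed under subtracting `t`, `b ∈ B`, `c ∉ B`, `c < b`,
then `t` does not divide `b - c`. -/
lemma not_dvd_of_closed {B : Finset ℕ} {t : ℕ}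
    (hcl : ∀ x ∈ B, t ≤ x → x - t ∈ B) {b c : ℕ} (hb : b ∈ B) (hc : c ∉ B)
    (hlt : c < b) : ¬ t ∣ (b - c) := by
  rintro ⟨m, hm⟩
  have key : ∀ m b, b ∈ B → c ≤ b → b - c = t * m → c ∈ B := by
    intro m
    induction m with
    | zero =>
      intro b hb hcb h
      have : b = c := by omega
      rwa [this] at hb
    | succ m ih =>
      intro b hb hcb h
      rw [Nat.mul_succ] at h
      have htb : t ≤ b := by omega
      have hbt : b - t ∈ B := hcl b hb htb
      have hcb' : c ≤ b - t := by
        rcases Nat.eq_zero_or_pos t with h0 | h0 <;> omega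
      exact ih (b - t) hbt hcb' (by omega)
  exact hc (key m b hb (le_of_lt hlt) hm)

/-- Any finite set of positive integers is the β-set of a partition, and that
partition is a `t`-core whenever the set is closed under subtracting `t`. -/
lemma exists_core_partition (B : Finset ℕ) (h0 : 0 ∉ B) :
    ∃ l : NatPartition, l.betaSet = B ∧
      ∀ t, (∀ x ∈ B, t ≤ x → x - t ∈ B) → l.IsCore t := by
  classical
  set L := B.sort (· ≥ ·) with hLdef
  have hsort : L.Pairwise (· ≥ ·) := Finset.pairwise_sort _ _
  have hnd : L.Nodup := Finset.sort_nodup _ _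
  have hstrict : L.Pairwise (· > ·) :=
    (hsort.and hnd).imp fun h => lt_of_le_of_ne h.1 (Ne.symm h.2)
  set n := L.length with hn
  set b : ℕ → ℕ := fun i => L.getD i 0 with hb
  have hbmem : ∀ i < n, b i ∈ B := by
    intro i hi
    have hmem : b i ∈ L := by
      show L.getD i 0 ∈ L
      rw [List.getD_eq_getElem _ _ hi]; exact List.getElem_mem hi
    exact (Finset.mem_sort _).mp hmem
  have hbpos : ∀ i < n, 0 < b i := by
    intro i hi
    exact Nat.pos_of_ne_zero (fun h => h0 (h ▸ hbmem i hi))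
  have hgap : ∀ i j, i ≤ j → j < n → b j + (j - i) ≤ b i := by
    intro i j hij hj
    have h := sorted_gt_gap L hstrict (j - i) i (by omega)
    have e : i + (j - i) = j := by omega
    rw [e] at h
    exact h
  have hlow : ∀ i < n, n - i ≤ b i := by
    intro i hi
    have h1 := hgap i (n - 1) (by omega) (by omega)
    have h2 := hbpos (n - 1) (by omega)
    omega
  set parts : List ℕ := (List.range n).map (fun i => b i - (n - 1 - i)) with hpartsdef
  have hplen : parts.length = n := by simp [hpartsdef]
  have hpget : ∀ i < n, parts.getD i 0 = b i - (n - 1 - i) := by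
    intro i hi
    rw [hpartsdef, List.getD_eq_getElem _ _ (by simpa using hi)]
    simp
  have hpsorted : parts.Pairwise (· ≥ ·) := by
    rw [List.pairwise_iff_getElem]
    intro i j hi hj hij
    have hi' : i < n := hplen ▸ hi
    have hj' : j < n := hplen ▸ hj
    have e1 : parts[i] = b i - (n - 1 - i) := by
      rw [← List.getD_eq_getElem parts 0 hi, hpget i hi']
    have e2 : parts[j] = b j - (n - 1 - j) := by
      rw [← List.getD_eq_getElem parts 0 hj, hpget j hj']
    have g := hgap i j (le_of_lt hij) hj'
    have l1 := hlow j hj'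
    rw [e1, e2]
    simp only [ge_iff_le]
    omega
  have hppos : ∀ x ∈ parts, 0 < x := by
    intro x hx
    rw [hpartsdef] at hx
    simp only [List.mem_map, List.mem_range] at hx
    obtain ⟨i, hi, rfl⟩ := hx
    have := hlow i hi
    omega
  refine ⟨⟨parts, hpsorted, hppos⟩, ?_, ?_⟩
  · -- betaSet = B
    have hcount : parts.countP (fun a => decide (0 < a)) = n := by
      rw [← hplen]
      apply List.countP_eq_length.mpr
      intro x hx
      simpa using hppos x hx
    have hhook0 : ∀ i < n, NatPartition.hook ⟨parts, hpsorted, hppos⟩ i 0 = b i := by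
      intro i hi
      simp only [NatPartition.hook]
      rw [hpget i hi, hcount]
      have := hlow i hi
      omega
    ext y
    simp only [NatPartition.betaSet, Finset.mem_image, Finset.mem_range, hplen]
    constructor
    · rintro ⟨i, hi, rfl⟩
      rw [hhook0 i hi]
      exact hbmem i hi
    · intro hy
      have hyL : y ∈ L := (Finset.mem_sort _).mpr hy
      obtain ⟨i, hi, he⟩ := List.mem_iff_getElem.mp hyL
      refine ⟨i, hi, ?_⟩
      rw [hhook0 i hi]
      show L.getD i 0 = y
      rw [List.getD_eq_getElem _ _ hi]
      exact he
  · -- core property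
    rintro t hcl i j ⟨hi, hj⟩ hdvd
    have hi' : i < n := hplen ▸ hi
    have hj' : j < b i - (n - 1 - i) := by
      rw [hpget i hi'] at hj; exact hj
    set r := parts.countP (fun a => decide (j < a)) with hr
    have hrle : r ≤ n := by rw [hr, ← hplen]; exact List.countP_le_length
    have hchar : ∀ k, k < n → (j < b k - (n - 1 - k) ↔ k < r) := by
      intro k hk
      have h := countP_sorted_char parts hpsorted j k (by omega)
      rw [hpget k hk, ← hr] at h
      exact h
    have hir : i < r := (hchar i hi').mp hj'
    set c := j + n - r with hc
    have hhook : NatPartition.hook ⟨parts, hpsorted, hppos⟩ i j = b i - c := by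
      simp only [NatPartition.hook]
      rw [hpget i hi', ← hr]
      have := hlow i hi'
      omega
    have hcnot : c ∉ B := by
      intro hcB
      have hcL : c ∈ L := (Finset.mem_sort _).mpr hcB
      obtain ⟨k, hk, he⟩ := List.mem_iff_getElem.mp hcL
      have hbk : b k = c := by
        show L.getD k 0 = c
        rw [List.getD_eq_getElem _ _ hk]; exact he
      by_cases hkr : k < r
      · have := (hchar k hk).mpr hkr
        omega
      · have : ¬ j < b k - (n - 1 - k) := fun h => hkr ((hchar k hk).mp h)
        omega
    have hbiB : b i ∈ B := hbmem i hi'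
    have hclt : c < b i := by
      have := hlow i hi'
      omega
    rw [hhook] at hdvd
    exact not_dvd_of_closed hcl hbiB hcnot hclt hdvd

theorem stmt6 (t p : ℕ) (ht : 0 < t) (hp : 0 < p) :
    ∃ l : NatPartition, (∀ i ≤ p, l.IsCore (t + i)) ∧
      l.betaSet = (Finset.Icc 1 ((t + p - 2) / p)).biUnion
        (fun k => Finset.Icc ((k - 1) * (t + p) + 1) (k * t - 1)) := by
  set K := (t + p - 2) / p with hK
  have h0 : 0 ∉ (Finset.Icc 1 K).biUnion
      (fun k => Finset.Icc ((k - 1) * (t + p) + 1) (k * t - 1)) := by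
    intro h
    rw [Finset.mem_biUnion] at h
    obtain ⟨k, hk, hx⟩ := h
    rw [Finset.mem_Icc] at hx
    omega
  obtain ⟨l, hbeta, hcore⟩ := exists_core_partition _ h0
  refine ⟨l, ?_, hbeta⟩
  intro i hi
  apply hcore (t + i)
  intro x hx htx
  rw [Finset.mem_biUnion] at hx ⊢
  obtain ⟨k, hk, hxk⟩ := hx
  rw [Finset.mem_Icc] at hk hxk
  have hk2 : 2 ≤ k := by
    by_contra h
    have hk1 : k = 1 := by omega
    subst hk1
    simp only [Nat.sub_self, zero_mul, one_mul] at hxk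
    omega
  have e1 : (k - 2) * (t + p) + (t + p) = (k - 1) * (t + p) := by
    have h : k - 2 + 1 = k - 1 := by omega
    calc (k - 2) * (t + p) + (t + p) = (k - 2 + 1) * (t + p) := by ring
    _ = (k - 1) * (t + p) := by rw [h]
  have e2 : (k - 1) * t + t = k * t := by
    have h : k - 1 + 1 = k := by omega
    calc (k - 1) * t + t = (k - 1 + 1) * t := by ring
    _ = k * t := by rw [h]
  refine ⟨k - 1, ?_, ?_⟩
  · rw [Finset.mem_Icc]
    omega
  · rw [Finset.mem_Icc]
    have e3 : k - 1 - 1 = k - 2 := by omega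
    rw [e3]
    omega
end

section
/- Let λ be a (t, t+1, …, t+p)-core partition, and for each k let b_k = |β(λ) ∩ S_k| where S_k = {x ∈ ℤ : (k−1)(t+p)+1 ≤ x ≤ kt−1}. If 1 ≤ k ≤ ⌊(t+p−2)/p⌋ − 1 and b_{k+1} ≠ 0, then b_k − b_{k+1} ≥ p. -/
open Finset

namespace NatPartition

/-- `lam l k` = the `k`-th part (0 if out of range). -/
def lam (l : NatPartition) (k : ℕ) : ℕ := l.parts.getD k 0

/-- `cfun l j` = number of parts greater than `j`. -/
def cfun (l : NatPartition) (j : ℕ) : ℕ := l.parts.countP (fun a => decide (j < a))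

/-- the abacus position function. -/
def g (l : NatPartition) (j : ℕ) : ℕ := j + l.parts.length - l.cfun j

lemma lam_eq (l : NatPartition) {k : ℕ} (hk : k < l.parts.length) : l.lam k = l.parts[k] :=
  List.getD_eq_getElem l.parts 0 hk

lemma lam_eq_zero (l : NatPartition) {k : ℕ} (hk : l.parts.length ≤ k) : l.lam k = 0 :=
  List.getD_eq_default l.parts 0 hk

lemma lam_pos_s7 (l : NatPartition) (k : ℕ) (hk : k < l.parts.length) : 0 < l.lam k := by
  rw [l.lam_eq hk]
  exact l.pos _ (List.getElem_mem hk)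

lemma lam_anti_s7 (l : NatPartition) {k1 k2 : ℕ} (h : k1 ≤ k2) : l.lam k2 ≤ l.lam k1 := by
  by_cases h2 : k2 < l.parts.length
  · rcases eq_or_lt_of_le h with rfl | hlt
    · exact le_rfl
    · have h1 : k1 < l.parts.length := lt_trans hlt h2
      have := (List.pairwise_iff_getElem.mp l.sorted) k1 k2 h1 h2 hlt
      rw [l.lam_eq h1, l.lam_eq h2]
      exact this
  · have : l.lam k2 = 0 := l.lam_eq_zero (le_of_not_gt h2)
    omega

lemma cfun_le (l : NatPartition) (j : ℕ) : l.cfun j ≤ l.parts.length :=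
  List.countP_le_length

lemma lt_cfun_of (l : NatPartition) {j k : ℕ} (h : j < l.lam k) : k < l.cfun j := by
  have hk : k < l.parts.length := by
    by_contra hk
    have : l.lam k = 0 := l.lam_eq_zero (le_of_not_gt hk)
    omega
  have hsplit : l.cfun j =
      (l.parts.take (k+1)).countP (fun a => decide (j < a)) +
      (l.parts.drop (k+1)).countP (fun a => decide (j < a)) := by
    rw [cfun, ← List.countP_append, List.take_append_drop]
  have htake : (l.parts.take (k+1)).countP (fun a => decide (j < a)) =
      (l.parts.take (k+1)).length := by
    rw [List.countP_eq_length]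
    intro a ha
    obtain ⟨m, hm, rfl⟩ := List.mem_iff_getElem.mp ha
    have hmlen : m < l.parts.length := lt_of_lt_of_le hm (by simp [List.length_take])
    have hmk : m ≤ k := by
      have := hm; simp [List.length_take] at this; omega
    have hlam : l.lam k ≤ l.lam m := l.lam_anti_s7 hmk
    have hval : (l.parts.take (k+1))[m] = l.parts[m] :=
      List.getElem_take
    have hj : j < l.parts[m] := by
      have : j < l.lam m := lt_of_lt_of_le h hlam
      rwa [l.lam_eq hmlen] at this
    simp [hval]
    omega
  have hlen : (l.parts.take (k+1)).length = k + 1 := by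
    simp [List.length_take]; omega
  omega

lemma cfun_le_of (l : NatPartition) {j k : ℕ} (h : l.lam k ≤ j) : l.cfun j ≤ k := by
  have hsplit : l.cfun j =
      (l.parts.take k).countP (fun a => decide (j < a)) +
      (l.parts.drop k).countP (fun a => decide (j < a)) := by
    rw [cfun, ← List.countP_append, List.take_append_drop]
  have hdrop : (l.parts.drop k).countP (fun a => decide (j < a)) = 0 := by
    rw [List.countP_eq_zero]
    intro a ha
    obtain ⟨m, hm, rfl⟩ := List.mem_iff_getElem.mp ha
    have hkm : k + m < l.parts.length := by
      have := hm; simp [List.length_drop] at this; omega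
    have hval : (l.parts.drop k)[m] = l.parts[k + m] := List.getElem_drop
    have hle : l.lam (k + m) ≤ l.lam k := l.lam_anti_s7 (Nat.le_add_right _ _)
    have hj : l.parts[k + m] ≤ j := by
      have : l.lam (k + m) ≤ j := le_trans hle h
      rwa [l.lam_eq hkm] at this
    simp [hval]
    omega
  have htake : (l.parts.take k).countP (fun a => decide (j < a)) ≤ k :=
    le_trans List.countP_le_length (by simp [List.length_take])
  omega

lemma count_iff (l : NatPartition) (j k : ℕ) : j < l.lam k ↔ k < l.cfun j := by
  constructor
  · exact l.lt_cfun_of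
  · intro h
    by_contra hc
    have := l.cfun_le_of (le_of_not_gt hc)
    omega

lemma cfun_anti (l : NatPartition) {j1 j2 : ℕ} (h : j1 ≤ j2) : l.cfun j2 ≤ l.cfun j1 := by
  by_contra hc
  have h1 : l.cfun j1 < l.cfun j2 := lt_of_not_ge hc
  have h2 : j2 < l.lam (l.cfun j1) := (l.count_iff j2 (l.cfun j1)).mpr h1
  have h3 : l.cfun j1 < l.cfun j1 := (l.count_iff j1 (l.cfun j1)).mp (by omega)
  omega

lemma cfun_zero (l : NatPartition) : l.cfun 0 = l.parts.length := by
  refine le_antisymm (l.cfun_le 0) ?_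
  by_contra hc
  push_neg at hc
  have h1 : 0 < l.lam (l.cfun 0) := l.lam_pos_s7 _ hc
  have := (l.count_iff 0 (l.cfun 0)).mp h1
  omega

lemma g_mono (l : NatPartition) {j1 j2 : ℕ} (h : j1 ≤ j2) : l.g j1 ≤ l.g j2 := by
  have h1 := l.cfun_anti h
  have h2 := l.cfun_le j1
  have h3 := l.cfun_le j2
  unfold g
  omega

lemma mem_beta_iff (l : NatPartition) (x : ℕ) :
    x ∈ l.betaSet ↔ ∃ i, i < l.parts.length ∧ x = l.lam i + l.parts.length - 1 - i := by
  simp only [betaSet, Finset.mem_image, Finset.mem_range]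
  constructor
  · rintro ⟨i, hi, rfl⟩
    refine ⟨i, hi, ?_⟩
    have hpos := l.lam_pos_s7 i hi
    have hc0 : l.parts.countP (fun a => decide (0 < a)) = l.parts.length := l.cfun_zero
    simp only [hook, hc0]
    unfold lam at *
    omega
  · rintro ⟨i, hi, rfl⟩
    refine ⟨i, hi, ?_⟩
    have hpos := l.lam_pos_s7 i hi
    have hc0 : l.parts.countP (fun a => decide (0 < a)) = l.parts.length := l.cfun_zero
    simp only [hook, hc0]
    unfold lam at *
    omega

lemma exists_g (l : NatPartition) (m : ℕ) (hm : m ∉ l.betaSet) : ∃ j, l.g j = m := by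
  set n := l.parts.length with hn
  have hg0 : l.g 0 = 0 := by unfold g; rw [l.cfun_zero]; omega
  have hgj : ∀ j, j ≤ l.g j := fun j => by have := l.cfun_le j; unfold g; omega
  set j0 := Nat.findGreatest (fun j => l.g j ≤ m) m with hj0def
  have hP0 : l.g 0 ≤ m := by omega
  have hj0 : l.g j0 ≤ m :=
    Nat.findGreatest_spec (P := fun j => l.g j ≤ m) (Nat.zero_le m) hP0
  have hnext : m < l.g (j0 + 1) := by
    by_cases hcase : j0 + 1 ≤ m
    · have hng := Nat.findGreatest_is_greatest (P := fun j => l.g j ≤ m) (n := m)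
        (k := j0 + 1) (by omega) hcase
      replace hng : ¬ (l.g (j0 + 1) ≤ m) := hng
      omega
    · have := hgj (j0 + 1)
      omega
  rcases eq_or_lt_of_le hj0 with heq | hlt
  · exact ⟨j0, heq⟩
  · exfalso
    apply hm
    have hc1 := l.cfun_le j0
    have hc2 := l.cfun_le (j0 + 1)
    have hca := l.cfun_anti (Nat.le_succ j0)
    have hgj0 : l.g j0 = j0 + n - l.cfun j0 := rfl
    have hgj1 : l.g (j0 + 1) = j0 + 1 + n - l.cfun (j0 + 1) := rfl
    set k := j0 + n - m with hk
    have hk1 : k < l.cfun j0 := by omega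
    have hk2 : l.cfun (j0 + 1) ≤ k := by omega
    have hkn : k < n := by omega
    have hlam1 : j0 < l.lam k := (l.count_iff j0 k).mpr hk1
    have hlam2 : ¬ (j0 + 1 < l.lam k) := by
      intro hc
      have := (l.count_iff (j0 + 1) k).mp hc
      omega
    have hlamk : l.lam k = j0 + 1 := by omega
    rw [l.mem_beta_iff]
    exact ⟨k, hkn, by omega⟩

lemma beta_closed (l : NatPartition) (s : ℕ) (hs : 0 < s) (hc : l.IsCore s)
    (x : ℕ) (hx : x ∈ l.betaSet) (hsx : s ≤ x) : x - s ∈ l.betaSet := by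
  by_contra hm
  obtain ⟨j, hj⟩ := l.exists_g (x - s) hm
  obtain ⟨i, hi, hxi⟩ := (l.mem_beta_iff x).mp hx
  set n := l.parts.length with hn
  have hpos := l.lam_pos_s7 i hi
  have hcj := l.cfun_le j
  -- show j < lam i
  have hji : j < l.lam i := by
    by_contra hcjil
    push_neg at hcjil
    have h1 : l.g (l.lam i) ≤ l.g j := l.g_mono hcjil
    have h2 : l.cfun (l.lam i) ≤ i := by
      by_contra hcc
      push_neg at hcc
      have := (l.count_iff (l.lam i) i).mpr hcc
      omega
    have h3 : l.g (l.lam i) = l.lam i + n - l.cfun (l.lam i) := rfl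
    have h4 : l.g j = j + n - l.cfun j := rfl
    omega
  have hicj : i < l.cfun j := (l.count_iff j i).mp (lt_of_lt_of_le hji (by
    exact le_of_eq rfl))
  have hgj : l.g j = j + n - l.cfun j := rfl
  have hhook : l.hook i j = s := by
    have : l.hook i j = l.lam i - j + l.cfun j - i - 1 := rfl
    rw [this]
    omega
  exact hc i j ⟨hi, hji⟩ (hhook ▸ dvd_refl s)

end NatPartition

theorem stmt7 (t p : ℕ) (ht : 0 < t) (hp : 0 < p) (l : NatPartition)
    (hcore : ∀ i ≤ p, l.IsCore (t + i)) (k : ℕ) (hk1 : 1 ≤ k)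
    (hk2 : k + 1 ≤ (t + p - 2) / p)
    (hb : (l.betaSet ∩ Finset.Icc (k * (t + p) + 1) ((k + 1) * t - 1)).card ≠ 0) :
    (l.betaSet ∩ Finset.Icc (k * (t + p) + 1) ((k + 1) * t - 1)).card + p ≤
      (l.betaSet ∩ Finset.Icc ((k - 1) * (t + p) + 1) (k * t - 1)).card := by
  classical
  set A := l.betaSet ∩ Finset.Icc (k * (t + p) + 1) ((k + 1) * t - 1) with hA
  set B := l.betaSet ∩ Finset.Icc ((k - 1) * (t + p) + 1) (k * t - 1) with hB
  have hAne : A.Nonempty := Finset.card_ne_zero.mp hb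
  set M := A.max' hAne with hMdef
  have hMA : M ∈ A := A.max'_mem hAne
  have hMbeta : M ∈ l.betaSet := (Finset.mem_inter.mp hMA).1
  have hMIcc := Finset.mem_Icc.mp (Finset.mem_inter.mp hMA).2
  have hMlb : k * (t + p) + 1 ≤ M := hMIcc.1
  have hMub : M ≤ (k + 1) * t - 1 := hMIcc.2
  have h1 : k * (t + p) = (k - 1) * (t + p) + (t + p) := by
    obtain ⟨n, rfl⟩ : ∃ n, k = n + 1 := ⟨k - 1, by omega⟩
    have hn : n + 1 - 1 = n := by omega
    rw [hn]; ring
  have hmul : t + p ≤ k * (t + p) := Nat.le_mul_of_pos_left (t + p) (by omega)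
  have hMbig : t + p + 1 ≤ M := by omega
  have closure : ∀ x ∈ l.betaSet, ∀ i ≤ p, t + i ≤ x → x - (t + i) ∈ l.betaSet :=
    fun x hx i hi hle => l.beta_closed (t + i) (by omega) (hcore i hi) x hx hle
  set C := A.image (fun x => x - (t + p)) ∪ (Finset.range p).image (fun i => M - (t + i))
    with hC
  have hCsub : C ⊆ B := by
    intro y hy
    rcases Finset.mem_union.mp hy with hy | hy
    · obtain ⟨x, hxA, rfl⟩ := Finset.mem_image.mp hy
      have hxbeta : x ∈ l.betaSet := (Finset.mem_inter.mp hxA).1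
      have hxIcc := Finset.mem_Icc.mp (Finset.mem_inter.mp hxA).2
      have hxlb : k * (t + p) + 1 ≤ x := hxIcc.1
      have hxub : x ≤ (k + 1) * t - 1 := hxIcc.2
      have hxbig : t + p + 1 ≤ x := by omega
      refine Finset.mem_inter.mpr ⟨closure x hxbeta p le_rfl (by omega), ?_⟩
      rw [Finset.mem_Icc]
      constructor
      · omega
      · have h2 : (k + 1) * t = k * t + t := by ring
        omega
    · obtain ⟨i, hi, rfl⟩ := Finset.mem_image.mp hy
      rw [Finset.mem_range] at hi
      refine Finset.mem_inter.mpr ⟨closure M hMbeta i (by omega) (by omega), ?_⟩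
      rw [Finset.mem_Icc]
      have h2 : (k + 1) * t = k * t + t := by ring
      constructor
      · omega
      · omega
  have hdisj : Disjoint (A.image (fun x => x - (t + p)))
      ((Finset.range p).image (fun i => M - (t + i))) := by
    rw [Finset.disjoint_left]
    intro y hy1 hy2
    obtain ⟨x, hxA, hxy⟩ := Finset.mem_image.mp hy1
    obtain ⟨i, hi, hiy⟩ := Finset.mem_image.mp hy2
    rw [Finset.mem_range] at hi
    replace hxy : x - (t + p) = y := hxy
    replace hiy : M - (t + i) = y := hiy
    have hxM : x ≤ M := A.le_max' x hxA
    omega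
  have hcard1 : (A.image (fun x => x - (t + p))).card = A.card := by
    apply Finset.card_image_of_injOn
    intro x hx y hyA hxy
    have hx1 := Finset.mem_Icc.mp (Finset.mem_inter.mp hx).2
    have hy1 := Finset.mem_Icc.mp (Finset.mem_inter.mp hyA).2
    have hxbig : t + p + 1 ≤ x := by omega
    have hybig : t + p + 1 ≤ y := by omega
    replace hxy : x - (t + p) = y - (t + p) := hxy
    omega
  have hcard2 : ((Finset.range p).image (fun i => M - (t + i))).card = p := by
    rw [Finset.card_image_of_injOn, Finset.card_range]
    intro i hi j hj hij
    rw [Finset.mem_coe, Finset.mem_range] at hi hj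
    replace hij : M - (t + i) = M - (t + j) := hij
    omega
  have hcardC : C.card = A.card + p := by
    rw [hC, Finset.card_union_of_disjoint hdisj, hcard1, hcard2]
  have := Finset.card_le_card hCsub
  omega
end

section
/- Define γ_i = μ_{i, i−p, i−2p, …, i−⌊(i−1)/p⌋p} for 1 ≤ i ≤ t−1 and f(i) = |γ_i|, with f(0) = 0. Then for 1 ≤ i ≤ p, m ≥ 0 and pm + i ≤ t − 1, one has f(pm+i) − f(pm+i−1) = C(m+2, 2)·(t − pm − 2i + 1). -/
open Finset

/-- β-set of the partition `μ_{c_1,…,c_r}`: the top `c k` elements of each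
interval `[(k-1)(t+p)+1, kt-1]`, i.e. `⋃_{1 ≤ k ≤ r} [kt - c_k, kt - 1]`. -/
def muBeta (t r : ℕ) (c : ℕ → ℕ) : Finset ℕ :=
  (Finset.Icc 1 r).biUnion (fun k => Finset.Icc (k * t - c k) (k * t - 1))

/-- β-set of `γ_i = μ_{i, i-p, i-2p, …, i - ⌊(i-1)/p⌋ p}`. -/
def gammaBeta (t p i : ℕ) : Finset ℕ :=
  muBeta t ((i - 1) / p + 1) (fun k => i - (k - 1) * p)

/-- `f i = |γ_i|`, the size of `γ_i` (equal to `0` when `i = 0`). -/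
def f (t p i : ℕ) : ℕ :=
  (∑ x ∈ gammaBeta t p i, x) - ((gammaBeta t p i).card).choose 2

lemma two_mul_choose_two (n : ℕ) : 2 * n.choose 2 = n * (n - 1) := by
  rcases n with _ | k
  · simp
  · rw [Nat.choose_two_right]
    simp only [Nat.add_sub_cancel]
    exact Nat.mul_div_cancel' (by simpa [Nat.mul_comm] using (Nat.even_mul_succ_self k).two_dvd)

lemma sum_ge_choose (s : Finset ℕ) : s.card.choose 2 ≤ ∑ x ∈ s, x := by
  induction s using Finset.strongInduction with
  | _ s ih =>
    rcases s.eq_empty_or_nonempty with rfl | hs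
    · simp
    · have ha : s.max' hs ∈ s := s.max'_mem hs
      have hsub : s.erase (s.max' hs) ⊂ s := Finset.erase_ssubset ha
      have IH := ih _ hsub
      have hcard : (s.erase (s.max' hs)).card = s.card - 1 := Finset.card_erase_of_mem ha
      have hle : s.card ≤ s.max' hs + 1 := by
        have hss : s ⊆ Finset.range (s.max' hs + 1) := fun x hx =>
          Finset.mem_range.2 (Nat.lt_succ_of_le (Finset.le_max' s x hx))
        simpa using Finset.card_le_card hss
      have hsum : ∑ x ∈ s, x = s.max' hs + ∑ x ∈ s.erase (s.max' hs), x :=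
        (Finset.add_sum_erase s id ha).symm
      have hpos : 1 ≤ s.card := Finset.card_pos.2 hs
      obtain ⟨d, hd⟩ : ∃ d, s.card = d + 1 := ⟨s.card - 1, by omega⟩
      have hch : s.card.choose 2 = (s.card - 1).choose 2 + (s.card - 1) := by
        rw [hd]; simp [Nat.choose_succ_succ, Nat.choose_one_right, Nat.add_comm]
      rw [hch, hsum]
      rw [hcard] at IH
      omega

lemma quadSum (n : ℕ) (g : ℕ → ℤ) (a b c : ℤ) (hg : ∀ j, j < n → g j = a + b * j + c * (j:ℤ)^2) :
    6 * ∑ j ∈ Finset.range n, g j =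
      6 * n * a + 3 * b * n * ((n:ℤ) - 1) + c * n * ((n:ℤ) - 1) * (2 * n - 1) := by
  induction n with
  | zero => simp
  | succ n ihn =>
    rw [Finset.sum_range_succ, mul_add, ihn (fun j hj => hg j (by omega)), hg n (by omega)]
    push_cast
    ring

lemma sum_Ico_int (a n : ℕ) :
    2 * ∑ x ∈ Finset.Ico a (a + n), (x:ℤ) = n * (2 * a + n - 1) := by
  rw [Finset.sum_Ico_eq_sum_range]
  simp only [Nat.add_sub_cancel_left]
  have h6 := quadSum n (fun j => ((a + j : ℕ) : ℤ)) a 1 0 (fun j hj => by push_cast; ring)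
  have h3 : (3:ℤ) * (2 * ∑ j ∈ Finset.range n, ((a + j : ℕ) : ℤ)) =
      3 * ((n:ℤ) * (2 * a + n - 1)) := by push_cast at h6 ⊢; linarith
  exact mul_left_cancel₀ (by norm_num : (3:ℤ) ≠ 0) h3

lemma disj_aux (t : ℕ) (ht : 0 < t) (x y cx cy : ℕ) (hx : 1 ≤ x) (hxy : x < y) (hcy : cy ≤ t) :
    Disjoint (Finset.Icc (x * t - cx) (x * t - 1)) (Finset.Icc (y * t - cy) (y * t - 1)) := by
  rw [Finset.disjoint_left]
  intro a ha hb
  rw [Finset.mem_Icc] at ha hb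
  have h1 : x * t ≤ (y - 1) * t := Nat.mul_le_mul_right t (by omega)
  have h2 : (y - 1) * t + t = y * t := by
    obtain ⟨d, rfl⟩ : ∃ d, y = d + 1 := ⟨y - 1, by omega⟩
    simp [Nat.add_mul]
  have h4 : 1 ≤ x * t := Nat.one_le_iff_ne_zero.2 (by positivity)
  omega

lemma muBeta_disj (t r : ℕ) (c : ℕ → ℕ) (ht : 0 < t) (hc : ∀ k ∈ Finset.Icc 1 r, c k ≤ t) :
    ∀ x ∈ Finset.Icc 1 r, ∀ y ∈ Finset.Icc 1 r, x ≠ y →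
      Disjoint (Finset.Icc (x * t - c x) (x * t - 1)) (Finset.Icc (y * t - c y) (y * t - 1)) := by
  intro x hx y hy hxy
  rcases lt_or_gt_of_ne hxy with hlt | hgt
  · exact disj_aux t ht x y (c x) (c y) (Finset.mem_Icc.1 hx).1 hlt (hc y hy)
  · exact (disj_aux t ht y x (c y) (c x) (Finset.mem_Icc.1 hy).1 hgt (hc x hx)).symm

lemma muBeta_card (t r : ℕ) (c : ℕ → ℕ) (ht : 0 < t) (hc : ∀ k ∈ Finset.Icc 1 r, c k ≤ t) :
    (muBeta t r c).card = ∑ k ∈ Finset.Icc 1 r, c k := by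
  unfold muBeta
  rw [Finset.card_biUnion (muBeta_disj t r c ht hc)]
  refine Finset.sum_congr rfl (fun k hk => ?_)
  have hk1 : 1 ≤ k := (Finset.mem_Icc.1 hk).1
  have hck := hc k hk
  have hkt : t ≤ k * t := Nat.le_mul_of_pos_left t hk1
  rw [Nat.card_Icc]
  omega

lemma muBeta_sum (t r : ℕ) (c : ℕ → ℕ) (ht : 0 < t) (hc : ∀ k ∈ Finset.Icc 1 r, c k ≤ t) :
    2 * ∑ x ∈ muBeta t r c, (x:ℤ) =
      ∑ k ∈ Finset.Icc 1 r, (c k : ℤ) * (2 * k * t - c k - 1) := by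
  unfold muBeta
  rw [Finset.sum_biUnion (fun x hx y hy hxy =>
    muBeta_disj t r c ht hc x (by simpa using hx) y (by simpa using hy) hxy)]
  rw [Finset.mul_sum]
  refine Finset.sum_congr rfl (fun k hk => ?_)
  have hk1 : 1 ≤ k := (Finset.mem_Icc.1 hk).1
  have hck := hc k hk
  have hkt : t ≤ k * t := Nat.le_mul_of_pos_left t hk1
  have heq : Finset.Icc (k * t - c k) (k * t - 1) =
      Finset.Ico (k * t - c k) ((k * t - c k) + c k) := by
    rw [show k * t - c k + c k = (k * t - 1) + 1 by omega, Finset.Ico_add_one_right_eq_Icc]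
  rw [heq, sum_Ico_int]
  have hck' : c k ≤ k * t := by omega
  push_cast [Nat.cast_sub hck']
  ring

/-- The value `72 * f(pm+i)` as a polynomial. -/
def E (t p m i : ℤ) : ℤ :=
  6 * (6 * (m + 1) * ((p * m + i) * (2 * t - (p * m + i) - 1))
    + 3 * ((p * m + i) * (2 * t + p) - p * (2 * t - (p * m + i) - 1)) * (m + 1) * m
    + (-p * (2 * t + p)) * (m + 1) * m * (2 * m + 1))
  - (3 * (m + 1) * (p * m + 2 * i)) * (3 * (m + 1) * (p * m + 2 * i) - 6)

lemma closed (t p m i : ℕ) (ht : 0 < t) (hp : 0 < p) (hi1 : 1 ≤ i) (hi2 : i ≤ p)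
    (h : p * m + i + 1 ≤ t) :
    72 * (f t p (p * m + i) : ℤ) = E t p m i := by
  have hr : (p * m + i - 1) / p + 1 = m + 1 := by
    have h1 : p * m + i - 1 = (i - 1) + p * m := by omega
    rw [h1, Nat.add_mul_div_left _ _ hp, Nat.div_eq_of_lt (by omega)]
    omega
  have hgb : gammaBeta t p (p * m + i) =
      muBeta t (m + 1) (fun k => p * m + i - (k - 1) * p) := by
    unfold gammaBeta; rw [hr]
  set c : ℕ → ℕ := fun k => p * m + i - (k - 1) * p with hcdef
  have hc : ∀ k ∈ Finset.Icc 1 (m + 1), c k ≤ t := fun k hk =>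
    le_trans (Nat.sub_le _ _) (by omega)
  have hconv : ∀ (F : ℕ → ℤ), ∑ k ∈ Finset.Icc 1 (m + 1), F k
      = ∑ j ∈ Finset.range (m + 1), F (1 + j) := by
    intro F
    rw [← Finset.Ico_add_one_right_eq_Icc, Finset.sum_Ico_eq_sum_range]
    norm_num
  have hcastc : ∀ j, j < m + 1 → ((c (1 + j) : ℕ) : ℤ) = (p:ℤ) * m + i - p * j := by
    intro j hj
    have h1 : 1 + j - 1 = j := by omega
    have h2 : j * p ≤ p * m + i := by
      have h3 : j * p ≤ m * p := Nat.mul_le_mul_right p (by omega)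
      have h4 : m * p = p * m := Nat.mul_comm m p
      omega
    simp only [hcdef, h1]
    rw [Nat.cast_sub h2]
    push_cast; ring
  -- card
  have hcard : ((gammaBeta t p (p * m + i)).card : ℤ)
      = ∑ j ∈ Finset.range (m + 1), ((c (1 + j) : ℕ) : ℤ) := by
    rw [hgb, muBeta_card t (m + 1) c ht hc]
    push_cast
    exact hconv _
  have hgN : ∀ j, j < m + 1 → ((c (1 + j) : ℕ) : ℤ)
      = ((p:ℤ) * m + i) + (-(p:ℤ)) * j + 0 * (j:ℤ)^2 :=
    fun j hj => by rw [hcastc j hj]; ring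
  have hN := quadSum (m + 1) (fun j => ((c (1 + j) : ℕ) : ℤ)) ((p:ℤ) * m + i) (-(p:ℤ)) 0 hgN
  -- sum
  have hS2 : 2 * ∑ x ∈ gammaBeta t p (p * m + i), (x:ℤ)
      = ∑ j ∈ Finset.range (m + 1),
          ((c (1 + j) : ℕ) : ℤ) * (2 * ((1 + j : ℕ) : ℤ) * t - (c (1 + j) : ℕ) - 1) := by
    rw [hgb, muBeta_sum t (m + 1) c ht hc]
    exact hconv _
  have hgS : ∀ j, j < m + 1 → ((c (1 + j) : ℕ) : ℤ) * (2 * ((1 + j : ℕ) : ℤ) * t - (c (1 + j) : ℕ) - 1)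
      = (((p:ℤ) * m + i) * (2 * t - ((p:ℤ) * m + i) - 1))
        + ((((p:ℤ) * m + i) * (2 * t + p) - p * (2 * t - ((p:ℤ) * m + i) - 1))) * j
        + (-(p:ℤ) * (2 * t + p)) * (j:ℤ)^2 :=
    fun j hj => by rw [hcastc j hj]; push_cast; ring
  have hS := quadSum (m + 1)
    (fun j => ((c (1 + j) : ℕ) : ℤ) * (2 * ((1 + j : ℕ) : ℤ) * t - (c (1 + j) : ℕ) - 1))
    (((p:ℤ) * m + i) * (2 * t - ((p:ℤ) * m + i) - 1))
    (((p:ℤ) * m + i) * (2 * t + p) - p * (2 * t - ((p:ℤ) * m + i) - 1))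
    (-(p:ℤ) * (2 * t + p)) hgS
  -- f cast
  have hf : (f t p (p * m + i) : ℤ)
      = (∑ x ∈ gammaBeta t p (p * m + i), (x:ℤ))
        - (((gammaBeta t p (p * m + i)).card).choose 2 : ℤ) := by
    unfold f
    rw [Nat.cast_sub (sum_ge_choose _)]
    push_cast
    ring
  have hch : 2 * ((((gammaBeta t p (p * m + i)).card).choose 2 : ℕ) : ℤ)
      = ((gammaBeta t p (p * m + i)).card : ℤ) * (((gammaBeta t p (p * m + i)).card : ℤ) - 1) := by
    have h2 := two_mul_choose_two (gammaBeta t p (p * m + i)).card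
    rcases Nat.eq_zero_or_pos (gammaBeta t p (p * m + i)).card with h0 | h0
    · simp [h0]
    · have := congrArg (fun x : ℕ => (x : ℤ)) h2
      push_cast [Nat.cast_sub h0] at this
      push_cast
      linarith
  -- assemble
  set N : ℤ := ((gammaBeta t p (p * m + i)).card : ℤ) with hNdef
  set S : ℤ := ∑ x ∈ gammaBeta t p (p * m + i), (x:ℤ) with hSdef
  rw [← hcard] at hN
  rw [← hS2] at hS
  push_cast at hN hS hch
  have hN2 : 2 * N = ((m:ℤ) + 1) * ((p:ℤ) * m + 2 * i) := by linarith
  have hch2 : 72 * ((((gammaBeta t p (p * m + i)).card).choose 2 : ℕ) : ℤ)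
      = 9 * (((m:ℤ) + 1) * ((p:ℤ) * m + 2 * i)) * ((((m:ℤ) + 1) * ((p:ℤ) * m + 2 * i)) - 2) := by
    linear_combination 36 * hch +
      (9 * (2 * N + ((m:ℤ) + 1) * ((p:ℤ) * m + 2 * i)) - 18) * hN2
  rw [hf]
  unfold E
  push_cast
  linear_combination 6 * hS - hch2

lemma f_zero (t p : ℕ) (ht : 0 < t) : f t p 0 = 0 := by
  have hg : gammaBeta t p 0 = ∅ := by
    unfold gammaBeta muBeta
    apply Finset.eq_empty_of_forall_notMem
    intro x hx
    rw [Finset.mem_biUnion] at hx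
    obtain ⟨k, hk, hx⟩ := hx
    rw [Finset.mem_Icc] at hk hx
    have hx' : k * t - (0 - (k - 1) * p) ≤ x ∧ x ≤ k * t - 1 := hx
    have h1 : 1 ≤ k * t := Nat.one_le_iff_ne_zero.2 (Nat.mul_ne_zero (by omega) (by omega))
    omega
  unfold f
  rw [hg]
  simp

theorem stmt10 (t p : ℕ) (ht : 0 < t) (hp : 0 < p) (i m : ℕ)
    (hi1 : 1 ≤ i) (hi2 : i ≤ p) (h : p * m + i ≤ t - 1) :
    (f t p (p * m + i) : ℤ) - (f t p (p * m + i - 1) : ℤ) =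
      ((m + 2).choose 2 : ℤ) * ((t : ℤ) - (p : ℤ) * m - 2 * i + 1) := by
  have ht1 : p * m + i + 1 ≤ t := by omega
  have h1 := closed t p m i ht hp hi1 hi2 ht1
  have hchn : 2 * (m + 2).choose 2 = (m + 2) * (m + 1) := by
    rw [two_mul_choose_two]
    rfl
  have hch : 2 * (((m + 2).choose 2 : ℕ) : ℤ) = ((m:ℤ) + 2) * ((m:ℤ) + 1) := by
    exact_mod_cast congrArg (fun x : ℕ => (x : ℤ)) hchn
  rcases Nat.lt_or_ge 1 i with hi | hi
  · -- i ≥ 2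
    have h2 := closed t p m (i - 1) ht hp (by omega) (by omega) (by omega)
    have he : p * m + i - 1 = p * m + (i - 1) := by omega
    rw [he]
    apply mul_left_cancel₀ (show (72:ℤ) ≠ 0 by norm_num)
    unfold E at h1 h2
    push_cast [Nat.cast_sub (show 1 ≤ i from hi1)] at h1 h2 hch ⊢
    linear_combination h1 - h2 - 36 * ((t:ℤ) - (p:ℤ) * m - 2 * i + 1) * hch
  · -- i = 1
    have hie : i = 1 := by omega
    subst hie
    rcases Nat.eq_zero_or_pos m with rfl | hm
    · have e1 : p * 0 + 1 = 1 := by omega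
      rw [e1] at h1 ⊢
      rw [show (1:ℕ) - 1 = 0 from rfl, f_zero t p ht]
      apply mul_left_cancel₀ (show (72:ℤ) ≠ 0 by norm_num)
      unfold E at h1
      push_cast at h1 hch ⊢
      linear_combination h1 - 36 * ((t:ℤ) - (p:ℤ) * 0 - 2 * 1 + 1) * hch
    · obtain ⟨d, rfl⟩ : ∃ d, m = d + 1 := ⟨m - 1, by omega⟩
      have hpm : p * d + p = p * (d + 1) := by ring
      have h2 := closed t p d p ht hp hp le_rfl (by omega)
      have he : p * (d + 1) + 1 - 1 = p * d + p := by omega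
      rw [he]
      apply mul_left_cancel₀ (show (72:ℤ) ≠ 0 by norm_num)
      unfold E at h1 h2
      push_cast at h1 h2 hch ⊢
      linear_combination h1 - h2 - 36 * ((t:ℤ) - (p:ℤ) * (d + 1) - 2 * 1 + 1) * hch
end

section
/- With γ_i and f as above, for 0 ≤ i ≤ p, m ≥ 0 and pm + i ≤ t − 1, one has f(pm+i) = C(m+2,2)·(it − ipm − i²) + C(m+2,3)·(pt − p²) − 3·C(m+2,4)·p². -/
set_option maxHeartbeats 1000000


open Finset

lemma sumId (M : ℕ) : (∑ j ∈ range M, (j:ℤ)) * 2 = M * (M - 1) := by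
  induction M with
  | zero => simp
  | succ k ih => rw [Finset.sum_range_succ]; push_cast; push_cast at ih; linear_combination ih

lemma polysum1 (a0 a1 : ℤ) (M : ℕ) :
    2 * ∑ j ∈ range M, (a0 + a1 * (j:ℤ)) = 2 * a0 * M + a1 * M * (M - 1) := by
  induction M with
  | zero => simp
  | succ k ih => rw [Finset.sum_range_succ]; push_cast; push_cast at ih; linear_combination ih

lemma polysum2 (a0 a1 a2 : ℤ) (M : ℕ) :
    6 * ∑ j ∈ range M, (a0 + a1 * (j:ℤ) + a2 * (j:ℤ)^2) =
      6 * a0 * M + 3 * a1 * M * (M - 1) + a2 * M * (M - 1) * (2 * M - 1) := by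
  induction M with
  | zero => simp
  | succ k ih => rw [Finset.sum_range_succ]; push_cast; push_cast at ih; linear_combination ih

lemma ch2 (n : ℕ) : (n.choose 2 : ℤ) * 2 = n * (n - 1) := by
  induction n with
  | zero => simp
  | succ k ih => rw [Nat.choose_succ_succ, Nat.choose_one_right]; push_cast; push_cast at ih; linear_combination ih

lemma ch3 (n : ℕ) : (n.choose 3 : ℤ) * 6 = n * (n - 1) * (n - 2) := by
  induction n with
  | zero => simp
  | succ k ih =>
    rw [Nat.choose_succ_succ]; push_cast; push_cast at ih
    linear_combination ih + 3 * ch2 k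

lemma ch4 (n : ℕ) : (n.choose 4 : ℤ) * 24 = n * (n - 1) * (n - 2) * (n - 3) := by
  induction n with
  | zero => simp
  | succ k ih =>
    rw [Nat.choose_succ_succ]; push_cast; push_cast at ih
    linear_combination ih + 4 * ch3 k

lemma sum_top (T c : ℕ) (hT : 1 ≤ T) (hc : c ≤ T) :
    ((∑ x ∈ Finset.Icc (T - c) (T - 1), x : ℕ) : ℤ) * 2 = c * (2 * T - c - 1) := by
  have hT1 : (T - 1) + 1 = T := by omega
  rw [← Finset.Ico_add_one_right_eq_Icc, hT1, Finset.sum_Ico_eq_sum_range,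
    (show T - (T - c) = c by omega)]
  push_cast [Nat.cast_sub hc]
  rw [Finset.sum_add_distrib, Finset.sum_const, Finset.card_range, nsmul_eq_mul]
  linear_combination sumId c

lemma card_top (T c : ℕ) (hT : 1 ≤ T) (hc : c ≤ T) :
    (Finset.Icc (T - c) (T - 1)).card = c := by
  rw [Nat.card_Icc]; omega

lemma main (t p i m : ℕ) (ht : 0 < t) (hp : 0 < p) (hi1 : 1 ≤ i) (hi2 : i ≤ p)
    (h : p * m + i + 1 ≤ t) :
    (f t p (p * m + i) : ℤ) =
      ((m + 2).choose 2 : ℤ) * ((i : ℤ) * t - (i : ℤ) * p * m - (i : ℤ) ^ 2) +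
        ((m + 2).choose 3 : ℤ) * ((p : ℤ) * t - (p : ℤ) ^ 2) -
        3 * ((m + 2).choose 4 : ℤ) * (p : ℤ) ^ 2 := by
  have hr : ((p * m + i) - 1) / p + 1 = m + 1 := by
    rw [(show p * m + i - 1 = (i-1) + p * m by omega), Nat.add_mul_div_left _ _ hp,
      Nat.div_eq_of_lt (by omega)]
    omega
  have hG : gammaBeta t p (p*m+i) =
      (Icc 1 (m+1)).biUnion (fun k => Finset.Icc (k*t - ((p*m+i) - (k-1)*p)) (k*t - 1)) := by
    unfold gammaBeta muBeta; rw [hr]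
  have hkt : ∀ k : ℕ, 1 ≤ k → k * t = (k-1)*t + t := by
    intro k hk
    cases k with
    | zero => omega
    | succ k' => simp [Nat.succ_sub_one, Nat.succ_mul]
  have key : ∀ k x : ℕ, 1 ≤ k → k*t - ((p*m+i) - (k-1)*p) ≤ x → x ≤ k*t - 1 →
      (k-1)*t + 1 ≤ x + 1 ∧ x + 1 ≤ k*t := by
    intro k x hk h1 h2
    have e := hkt k hk
    omega
  have hdisj : ∀ k ∈ Icc 1 (m+1), ∀ l ∈ Icc 1 (m+1), k ≠ l →
      Disjoint (Finset.Icc (k*t - ((p*m+i) - (k-1)*p)) (k*t - 1))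
        (Finset.Icc (l*t - ((p*m+i) - (l-1)*p)) (l*t - 1)) := by
    intro k hk l hl hne
    rw [Finset.mem_Icc] at hk hl
    rw [Finset.disjoint_left]
    intro x hx hx'
    rw [Finset.mem_Icc] at hx hx'
    obtain ⟨a1, a2⟩ := key k x hk.1 hx.1 hx.2
    obtain ⟨b1, b2⟩ := key l x hl.1 hx'.1 hx'.2
    rcases Nat.lt_or_ge k l with hkl | hkl
    · have : k * t ≤ (l-1)*t := Nat.mul_le_mul_right t (by omega)
      omega
    · have hlk : l < k := by omega
      have : l * t ≤ (k-1)*t := Nat.mul_le_mul_right t (by omega)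
      omega
  have hTk : ∀ k : ℕ, 1 ≤ k → 1 ≤ k * t ∧ (p*m+i) - (k-1)*p ≤ k*t := by
    intro k hk
    have e := hkt k hk
    omega
  have hcard : (gammaBeta t p (p*m+i)).card = ∑ k ∈ Icc 1 (m+1), ((p*m+i) - (k-1)*p) := by
    rw [hG, Finset.card_biUnion hdisj]
    refine Finset.sum_congr rfl fun k hk => ?_
    rw [Finset.mem_Icc] at hk
    exact card_top _ _ (hTk k hk.1).1 (hTk k hk.1).2
  have hsum2 : ((∑ x ∈ gammaBeta t p (p*m+i), x : ℕ) : ℤ) * 2 =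
      ∑ k ∈ Icc 1 (m+1), (((p*m+i) - (k-1)*p : ℕ) : ℤ) * (2*(k*t : ℕ) - ((p*m+i) - (k-1)*p : ℕ) - 1) := by
    rw [hG, Finset.sum_biUnion hdisj]
    push_cast
    rw [Finset.sum_mul]
    refine Finset.sum_congr rfl fun k hk => ?_
    rw [Finset.mem_Icc] at hk
    have := sum_top (k*t) ((p*m+i) - (k-1)*p) (hTk k hk.1).1 (hTk k hk.1).2
    push_cast at this ⊢
    linear_combination this
  have hcard' : ((gammaBeta t p (p*m+i)).card : ℤ) =
      ∑ j ∈ range (m+1), (((p:ℤ)*(m:ℤ)+(i:ℤ)) + (-(p:ℤ)) * (j:ℤ)) := by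
    rw [hcard]
    push_cast
    rw [← Finset.Ico_add_one_right_eq_Icc, Finset.sum_Ico_eq_sum_range]
    simp only [Nat.add_sub_cancel]
    refine Finset.sum_congr rfl fun j hj => ?_
    rw [Finset.mem_range] at hj
    have hle : (1 + j - 1) * p ≤ p*m+i := by
      have : j * p ≤ m * p := Nat.mul_le_mul_right p (by omega)
      have e : (1 + j - 1) = j := by omega
      rw [e]; nlinarith
    rw [Nat.cast_sub hle]
    have e : (1 + j - 1) = j := by omega
    rw [e]; push_cast; ring
  have hsum' : ((∑ x ∈ gammaBeta t p (p*m+i), x : ℕ) : ℤ) * 2 =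
      ∑ j ∈ range (m+1), ((2*(t:ℤ)*((p:ℤ)*(m:ℤ)+(i:ℤ)) - ((p:ℤ)*(m:ℤ)+(i:ℤ))^2 - ((p:ℤ)*(m:ℤ)+(i:ℤ))) + (2*(t:ℤ)*((p:ℤ)*(m:ℤ)+(i:ℤ)) - 2*(t:ℤ)*(p:ℤ) + 2*((p:ℤ)*(m:ℤ)+(i:ℤ))*(p:ℤ) + (p:ℤ)) * (j:ℤ) + (-(2*(t:ℤ)*(p:ℤ)) - (p:ℤ)^2) * (j:ℤ)^2) := by
    rw [hsum2, ← Finset.Ico_add_one_right_eq_Icc, Finset.sum_Ico_eq_sum_range]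
    simp only [Nat.add_sub_cancel]
    refine Finset.sum_congr rfl fun j hj => ?_
    rw [Finset.mem_range] at hj
    have e : (1 + j - 1) = j := by omega
    rw [e]
    have hle : j * p ≤ p*m+i := by
      have : j * p ≤ m * p := Nat.mul_le_mul_right p (by omega)
      nlinarith
    rw [Nat.cast_sub hle]
    push_cast
    ring
  have hV : ((gammaBeta t p (p*m+i)).card : ℤ) * 2 = (2*((p:ℤ)*(m:ℤ)+(i:ℤ))*((m:ℤ)+1) + (-(p:ℤ))*((m:ℤ)+1)*(m:ℤ)) := by
    rw [hcard']
    have h1 := polysum1 ((p:ℤ)*(m:ℤ)+(i:ℤ)) (-(p:ℤ)) (m+1)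
    push_cast at h1
    linear_combination h1
  have hQ : ((∑ x ∈ gammaBeta t p (p*m+i), x : ℕ) : ℤ) * 12 = (6*(2*(t:ℤ)*((p:ℤ)*(m:ℤ)+(i:ℤ)) - ((p:ℤ)*(m:ℤ)+(i:ℤ))^2 - ((p:ℤ)*(m:ℤ)+(i:ℤ)))*((m:ℤ)+1) + 3*(2*(t:ℤ)*((p:ℤ)*(m:ℤ)+(i:ℤ)) - 2*(t:ℤ)*(p:ℤ) + 2*((p:ℤ)*(m:ℤ)+(i:ℤ))*(p:ℤ) + (p:ℤ))*((m:ℤ)+1)*(m:ℤ) + (-(2*(t:ℤ)*(p:ℤ)) - (p:ℤ)^2)*((m:ℤ)+1)*(m:ℤ)*(2*(m:ℤ)+1)) := by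
    have h2 := polysum2 (2*(t:ℤ)*((p:ℤ)*(m:ℤ)+(i:ℤ)) - ((p:ℤ)*(m:ℤ)+(i:ℤ))^2 - ((p:ℤ)*(m:ℤ)+(i:ℤ))) (2*(t:ℤ)*((p:ℤ)*(m:ℤ)+(i:ℤ)) - 2*(t:ℤ)*(p:ℤ) + 2*((p:ℤ)*(m:ℤ)+(i:ℤ))*(p:ℤ) + (p:ℤ)) (-(2*(t:ℤ)*(p:ℤ)) - (p:ℤ)^2) (m+1)
    push_cast at h2
    linear_combination 6*hsum' + h2
  have hBA : ((∑ x ∈ gammaBeta t p (p*m+i), x : ℕ) : ℤ) * 24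
      - (((gammaBeta t p (p*m+i)).card.choose 2 : ℕ) : ℤ) * 24 = (12*((m:ℤ)+1)*((m:ℤ)+2)*((i:ℤ)*(t:ℤ) - (i:ℤ)*(p:ℤ)*(m:ℤ) - (i:ℤ)^2) + 4*(m:ℤ)*((m:ℤ)+1)*((m:ℤ)+2)*((p:ℤ)*(t:ℤ) - (p:ℤ)^2) - 3*((m:ℤ)-1)*(m:ℤ)*((m:ℤ)+1)*((m:ℤ)+2)*(p:ℤ)^2) := by
    have c2 := ch2 (gammaBeta t p (p*m+i)).card
    linear_combination 2*hQ - 12*c2 - (6*((gammaBeta t p (p*m+i)).card : ℤ) + 3*(2*((p:ℤ)*(m:ℤ)+(i:ℤ))*((m:ℤ)+1) + (-(p:ℤ))*((m:ℤ)+1)*(m:ℤ)) - 6)*hV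
  have hi' : 1 ≤ (i:ℤ) := by exact_mod_cast hi1
  have hip : (i:ℤ) ≤ (p:ℤ) := by exact_mod_cast hi2
  have hT : (p:ℤ)*(m:ℤ) + (i:ℤ) + 1 ≤ (t:ℤ) := by exact_mod_cast h
  have hE : 0 ≤ (12*((m:ℤ)+1)*((m:ℤ)+2)*((i:ℤ)*(t:ℤ) - (i:ℤ)*(p:ℤ)*(m:ℤ) - (i:ℤ)^2) + 4*(m:ℤ)*((m:ℤ)+1)*((m:ℤ)+2)*((p:ℤ)*(t:ℤ) - (p:ℤ)^2) - 3*((m:ℤ)-1)*(m:ℤ)*((m:ℤ)+1)*((m:ℤ)+2)*(p:ℤ)^2) := by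
    rcases Nat.eq_zero_or_pos m with hm | hm
    · subst hm
      push_cast
      nlinarith [mul_nonneg (by linarith : (0:ℤ) ≤ (i:ℤ)) (by linarith : (0:ℤ) ≤ (t:ℤ) - (i:ℤ))]
    · obtain ⟨m', rfl⟩ : ∃ m', m = m' + 1 := ⟨m - 1, by omega⟩
      have hm0 : (0:ℤ) ≤ (m':ℤ) := by positivity
      have hp' : (1:ℤ) ≤ (p:ℤ) := by exact_mod_cast hp
      push_cast at hT ⊢
      have hs : (0:ℤ) ≤ (t:ℤ) - (p:ℤ)*(m':ℤ) - (p:ℤ) - (i:ℤ) := by nlinarith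
      have f1 : (0:ℤ) ≤ 12*((m':ℤ)+2)*((m':ℤ)+3)*(i:ℤ)*((t:ℤ) - (p:ℤ)*(m':ℤ) - (p:ℤ) - (i:ℤ)) := by
        have := mul_nonneg (mul_nonneg (mul_nonneg (by linarith : (0:ℤ) ≤ 12*((m':ℤ)+2)) (by linarith : (0:ℤ) ≤ (m':ℤ)+3)) (by linarith : (0:ℤ) ≤ (i:ℤ))) hs
        linarith [this]
      have f2 : (0:ℤ) ≤ 4*((m':ℤ)+1)*((m':ℤ)+2)*((m':ℤ)+3)*(p:ℤ)*((t:ℤ) - (p:ℤ)*(m':ℤ) - (p:ℤ) - (i:ℤ)) := by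
        have := mul_nonneg (mul_nonneg (mul_nonneg (mul_nonneg (by linarith : (0:ℤ) ≤ 4*((m':ℤ)+1)) (by linarith : (0:ℤ) ≤ (m':ℤ)+2)) (by linarith : (0:ℤ) ≤ (m':ℤ)+3)) (by linarith : (0:ℤ) ≤ (p:ℤ))) hs
        linarith [this]
      have f3 : (0:ℤ) ≤ 4*((m':ℤ)+1)*((m':ℤ)+2)*((m':ℤ)+3)*(p:ℤ)*(i:ℤ) := by positivity
      have f4 : (0:ℤ) ≤ ((m':ℤ)+1)*((m':ℤ)+2)*((m':ℤ)+3)*(p:ℤ)^2*(m':ℤ) := by positivity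
      nlinarith [f1, f2, f3, f4]
  have hle : ((gammaBeta t p (p*m+i)).card).choose 2 ≤ ∑ x ∈ gammaBeta t p (p*m+i), x := by
    have : (((gammaBeta t p (p*m+i)).card.choose 2 : ℕ) : ℤ) ≤ ((∑ x ∈ gammaBeta t p (p*m+i), x : ℕ) : ℤ) := by
      linarith
    exact_mod_cast this
  have hf : (f t p (p*m+i) : ℤ) = ((∑ x ∈ gammaBeta t p (p*m+i), x : ℕ) : ℤ)
      - (((gammaBeta t p (p*m+i)).card.choose 2 : ℕ) : ℤ) := by
    have e : f t p (p*m+i) = (∑ x ∈ gammaBeta t p (p*m+i), x) - ((gammaBeta t p (p*m+i)).card).choose 2 := rfl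
    rw [e, Nat.cast_sub hle]
  rw [hf]
  have c2 := ch2 (m+2); have c3 := ch3 (m+2); have c4 := ch4 (m+2)
  push_cast at c2 c3 c4
  apply mul_left_cancel₀ (show (24:ℤ) ≠ 0 by norm_num)
  linear_combination hBA + (-12)*((i:ℤ)*(t:ℤ) - (i:ℤ)*(p:ℤ)*(m:ℤ) - (i:ℤ)^2)*c2 + (-4)*((p:ℤ)*(t:ℤ) - (p:ℤ)^2)*c3 + 3*(p:ℤ)^2*c4


theorem stmt11 (t p : ℕ) (ht : 0 < t) (hp : 0 < p) (i m : ℕ)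
    (hi : i ≤ p) (h : p * m + i ≤ t - 1) :
    (f t p (p * m + i) : ℤ) =
      ((m + 2).choose 2 : ℤ) * ((i : ℤ) * t - (i : ℤ) * p * m - (i : ℤ) ^ 2) +
        ((m + 2).choose 3 : ℤ) * ((p : ℤ) * t - (p : ℤ) ^ 2) -
        3 * ((m + 2).choose 4 : ℤ) * (p : ℤ) ^ 2 := by
  rcases Nat.eq_zero_or_pos i with hi0 | hi1
  · subst hi0
    rcases Nat.eq_zero_or_pos m with hm | hm
    · subst hm
      have hg : gammaBeta t p 0 = ∅ := by
        ext x
        simp only [gammaBeta, muBeta, Finset.mem_biUnion, Finset.mem_Icc,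
          Finset.notMem_empty, iff_false, not_exists, not_and]
        intro k hk hx1 hx2
        have h1 : 1 ≤ k := hk.1
        have h2 : 1 ≤ k * t := Nat.mul_pos (by omega) ht
        omega
      norm_num [f, hg, Nat.choose]
    · obtain ⟨m', rfl⟩ : ∃ m', m = m' + 1 := ⟨m - 1, by omega⟩
      have e : p * (m' + 1) + 0 = p * m' + p := by ring
      rw [e]
      rw [main t p p m' ht hp hp (le_refl p) (by omega)]
      have c2 := ch2 (m'+2); have c3 := ch3 (m'+2); have c4 := ch4 (m'+2)
      have d3 := ch3 (m'+3); have d4 := ch4 (m'+3)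
      push_cast at c2 c3 c4 d3 d4 ⊢
      apply mul_left_cancel₀ (show (24:ℤ) ≠ 0 by norm_num)
      linear_combination 12*((p:ℤ)*(t:ℤ) - (p:ℤ)^2*(m':ℤ) - (p:ℤ)^2)*c2
        + 4*((p:ℤ)*(t:ℤ) - (p:ℤ)^2)*c3 - 3*(p:ℤ)^2*c4
        - 4*((p:ℤ)*(t:ℤ) - (p:ℤ)^2)*d3 + 3*(p:ℤ)^2*d4
  · exact main t p i m ht hp hi1 hi (by omega)
end
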